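/- Let k ≥ l ≥ 0 and let π : ℕ → (Fin n → ℝ) be a (k,l)-lasso sequence, i.e., there exists α ∈ ℝ with π (k+1+j) i = α + π (l+j) i for all j ≥ 0 and all i. Then for every TDLTL formula φ in positive normal form over dimension n, π ⊨_{k,l} φ (bounded lasso satisfaction at position 0) if and only if π ⊨ φ. -/

import Mathlib

/-- Comparison symbol `∼ ∈ {≥, >}`. -/
inductive Cmp where
  | ge : Cmp
  | gt : Cmp

/-- The relation on `ℝ` denoted by a comparison symbol. -/
def Cmp.rel : Cmp → ℝ → ℝ → Prop
  | .ge => (· ≥ ·)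
  | .gt => (· > ·)

/-- TDLTL formulas in positive normal form over dimension `n`. -/
inductive TDLTL (n : ℕ) where
  | top : TDLTL n
  | bot : TDLTL n
  | atom (i j : Fin n) (c : Cmp) (α : ℝ) : TDLTL n
  | natom (i j : Fin n) (c : Cmp) (α : ℝ) : TDLTL n
  | and (φ₁ φ₂ : TDLTL n) : TDLTL n
  | or (φ₁ φ₂ : TDLTL n) : TDLTL n
  | next (φ : TDLTL n) : TDLTL n
  | untl (φ₁ φ₂ : TDLTL n) : TDLTL n
  | release (φ₁ φ₂ : TDLTL n) : TDLTL n

/-- The suffix `π[m..]` of a sequence. -/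
def shift {n : ℕ} (π : ℕ → Fin n → ℝ) (m : ℕ) : ℕ → Fin n → ℝ :=
  fun t => π (m + t)

/-- (Unbounded) TDLTL satisfaction `π ⊨ φ`. -/
def Sat {n : ℕ} : TDLTL n → (ℕ → Fin n → ℝ) → Prop
  | .top, _ => True
  | .bot, _ => False
  | .atom i j c α, π => c.rel (π 0 i - π 0 j) α
  | .natom i j c α, π => ¬ c.rel (π 0 i - π 0 j) α
  | .and φ₁ φ₂, π => Sat φ₁ π ∧ Sat φ₂ π
  | .or φ₁ φ₂, π => Sat φ₁ π ∨ Sat φ₂ π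
  | .next φ, π => Sat φ (shift π 1)
  | .untl φ₁ φ₂, π => ∃ j : ℕ, Sat φ₂ (shift π j) ∧ ∀ t < j, Sat φ₁ (shift π t)
  | .release φ₁ φ₂, π =>
      (∀ j : ℕ, Sat φ₂ (shift π j)) ∨
      (∃ j : ℕ, Sat φ₁ (shift π j) ∧ ∀ t ≤ j, Sat φ₂ (shift π t))

/-- Bounded lasso satisfaction `sat(m, φ)` over a `(k,l)`-lasso `π`. -/
def BSat {n : ℕ} (π : ℕ → Fin n → ℝ) (k l : ℕ) : TDLTL n → ℕ → Prop
  | .top, _ => True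
  | .bot, _ => False
  | .atom i j c α, m => c.rel (π m i - π m j) α
  | .natom i j c α, m => ¬ c.rel (π m i - π m j) α
  | .and φ₁ φ₂, m => BSat π k l φ₁ m ∧ BSat π k l φ₂ m
  | .or φ₁ φ₂, m => BSat π k l φ₁ m ∨ BSat π k l φ₂ m
  | .next φ, m => if m < k then BSat π k l φ (m + 1) else BSat π k l φ l
  | .untl φ₁ φ₂, m =>
      (∃ j : ℕ, m ≤ j ∧ j ≤ k ∧ BSat π k l φ₂ j ∧
        ∀ t : ℕ, m ≤ t → t < j → BSat π k l φ₁ t) ∨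
      (∃ j : ℕ, l ≤ j ∧ j < m ∧ BSat π k l φ₂ j ∧
        (∀ t : ℕ, m ≤ t → t ≤ k → BSat π k l φ₁ t) ∧
        (∀ t : ℕ, l ≤ t → t < j → BSat π k l φ₁ t))
  | .release φ₁ φ₂, m =>
      (∀ j : ℕ, min m l ≤ j → j ≤ k → BSat π k l φ₂ j) ∨
      (∃ j : ℕ, m ≤ j ∧ j ≤ k ∧ BSat π k l φ₁ j ∧
        ∀ t : ℕ, m ≤ t → t ≤ j → BSat π k l φ₂ t) ∨
      (∃ j : ℕ, l ≤ j ∧ j < m ∧ BSat π k l φ₁ j ∧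
        (∀ t : ℕ, m ≤ t → t ≤ k → BSat π k l φ₂ t) ∧
        (∀ t : ℕ, l ≤ t → t ≤ j → BSat π k l φ₂ t))

/-!
The lasso condition says that `π (k + 1 + d)` is `π (l + d)` translated by a constant vector, and
difference constraints are blind to such translations, so whether the suffix `π[t..]` satisfies a
formula is a predicate of `t` that repeats with period `k + 1 - l` from `l` on. One then shows by
induction on `φ` that `sat(m, φ)` agrees with `π[m..] ⊨ φ` for every `m ≤ k`. For `U`, a
witness beyond `k` may be chosen less than one period past `k`, and folding it back by one period
gives the second clause of the bounded semantics; `R` reduces to `U` through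
`φ₁ R φ₂ ≡ G φ₂ ∨ φ₂ U (φ₁ ∧ φ₂)`.
-/

def LassoPeriodic (k l : ℕ) (P : ℕ → Prop) : Prop :=
  ∀ d, P (k + 1 + d) ↔ P (l + d)

namespace LassoPeriodic

variable {k l m : ℕ} {P Q : ℕ → Prop}

theorem iff_of_add_eq (hP : LassoPeriodic k l P) {s t : ℕ} (ht : l ≤ t)
    (hst : s + l = t + (k + 1)) : P s ↔ P t := by
  obtain ⟨d, rfl⟩ := Nat.exists_eq_add_of_le ht
  obtain rfl : s = k + 1 + d := by omega
  exact hP d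

protected theorem and (hP : LassoPeriodic k l P) (hQ : LassoPeriodic k l Q) :
    LassoPeriodic k l fun t => P t ∧ Q t :=
  fun d => and_congr (hP d) (hQ d)

theorem forall_ge_of_forall_Icc (hlk : l ≤ k) (hP : LassoPeriodic k l P)
    (h : ∀ t, l ≤ t → t ≤ k → P t) : ∀ t, l ≤ t → P t := by
  intro t
  induction t using Nat.strong_induction_on with
  | _ t ih =>
    intro hlt
    by_cases htk : t ≤ k
    · exact h t hlt htk
    · exact (hP.iff_of_add_eq (t := t - (k + 1 - l)) (by omega) (by omega)).2
        (ih _ (by omega) (by omega))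

theorem forall_ge_iff_forall_Icc (hlk : l ≤ k) (hm : m ≤ k) (hP : LassoPeriodic k l P) :
    (∀ t, m ≤ t → P t) ↔ ∀ t, min m l ≤ t → t ≤ k → P t := by
  refine ⟨fun h t hmin _ => ?_, fun h t hmt => ?_⟩
  · by_cases hmt : m ≤ t
    · exact h t hmt
    · exact (hP.iff_of_add_eq (s := t + (k + 1 - l)) (by omega) (by omega)).1 (h _ (by omega))
  · by_cases htk : t ≤ k
    · exact h t (by omega) htk
    · exact hP.forall_ge_of_forall_Icc hlk (fun s hls hsk => h s (by omega) hsk) t (by omega)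

theorem exists_until_le (hlk : l ≤ k) (hm : m ≤ k) (hQ : LassoPeriodic k l Q)
    (h : ∃ j, m ≤ j ∧ Q j ∧ ∀ t, m ≤ t → t < j → P t) :
    ∃ j, m ≤ j ∧ j ≤ k + (k + 1 - l) ∧ Q j ∧ ∀ t, m ≤ t → t < j → P t := by
  classical
  obtain ⟨hmj, hQj, hPj⟩ := Nat.find_spec h
  refine ⟨Nat.find h, hmj, ?_, hQj, hPj⟩
  by_contra! hbig
  refine Nat.find_min h (m := Nat.find h - (k + 1 - l)) (by omega) ⟨by omega, ?_, ?_⟩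
  · exact (hQ.iff_of_add_eq (by omega) (by omega)).1 hQj
  · exact fun t hmt ht => hPj t hmt (by omega)

end LassoPeriodic

/-- The clauses of `sat(m, φ₁ U φ₂)`, with `P` and `Q` in place of `sat(·, φ₁)` and
`sat(·, φ₂)`. In the second clause the witness `j < m` is reached by running from `m` to `k` and
then looping back to `l`. -/
def BoundedUntil (k l : ℕ) (P Q : ℕ → Prop) (m : ℕ) : Prop :=
  (∃ j, m ≤ j ∧ j ≤ k ∧ Q j ∧ ∀ t, m ≤ t → t < j → P t) ∨
  (∃ j, l ≤ j ∧ j < m ∧ Q j ∧ (∀ t, m ≤ t → t ≤ k → P t) ∧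
    ∀ t, l ≤ t → t < j → P t)

namespace BoundedUntil

variable {k l m : ℕ} {P Q P' Q' : ℕ → Prop}

theorem congr (hm : m ≤ k) (hP : ∀ t ≤ k, P t ↔ P' t) (hQ : ∀ t ≤ k, Q t ↔ Q' t) :
    BoundedUntil k l P Q m ↔ BoundedUntil k l P' Q' m :=
  or_congr
    (exists_congr fun j => and_congr_right fun _ => and_congr_right fun hjk =>
      and_congr (hQ j hjk) (forall₃_congr fun t _ htj => hP t (by omega)))
    (exists_congr fun j => and_congr_right fun _ => and_congr_right fun hjm =>
      and_congr (hQ j (by omega)) (and_congr (forall₃_congr fun t _ htk => hP t htk)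
        (forall₃_congr fun t _ htj => hP t (by omega))))

theorem exists_until (hm : m ≤ k) (hP : LassoPeriodic k l P) (hQ : LassoPeriodic k l Q)
    (h : BoundedUntil k l P Q m) : ∃ j, m ≤ j ∧ Q j ∧ ∀ t, m ≤ t → t < j → P t := by
  rcases h with ⟨j, hmj, -, hQj, hPj⟩ | ⟨j, hlj, hjm, hQj, hPk, hPj⟩
  · exact ⟨j, hmj, hQj, hPj⟩
  · refine ⟨k + 1 + (j - l), by omega, (hQ.iff_of_add_eq hlj (by omega)).2 hQj,
      fun t hmt ht => ?_⟩
    by_cases htk : t ≤ k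
    · exact hPk t hmt htk
    · exact (hP.iff_of_add_eq (t := t - (k + 1 - l)) (by omega) (by omega)).2
        (hPj _ (by omega) (by omega))

theorem of_exists_until (hlk : l ≤ k) (hm : m ≤ k) (hP : LassoPeriodic k l P)
    (hQ : LassoPeriodic k l Q) (h : ∃ j, m ≤ j ∧ Q j ∧ ∀ t, m ≤ t → t < j → P t) :
    BoundedUntil k l P Q m := by
  obtain ⟨j, hmj, hj, hQj, hPj⟩ := hQ.exists_until_le hlk hm h
  by_cases hjk : j ≤ k
  · exact Or.inl ⟨j, hmj, hjk, hQj, hPj⟩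
  set i := j - (k + 1 - l)
  have hQi : Q i := (hQ.iff_of_add_eq (by omega) (by omega)).1 hQj
  have hPi : ∀ t, l ≤ t → t < i → P t := fun t hlt hti =>
    (hP.iff_of_add_eq (s := t + (k + 1 - l)) hlt (by omega)).1 (hPj _ (by omega) (by omega))
  by_cases hmi : m ≤ i
  · exact Or.inl ⟨i, hmi, by omega, hQi, fun t hmt _ => hPj t hmt (by omega)⟩
  · exact Or.inr ⟨i, by omega, by omega, hQi, fun t hmt _ => hPj t hmt (by omega), hPi⟩

theorem iff_exists_until (hlk : l ≤ k) (hm : m ≤ k) (hP : LassoPeriodic k l P)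
    (hQ : LassoPeriodic k l Q) :
    BoundedUntil k l P Q m ↔ ∃ j, m ≤ j ∧ Q j ∧ ∀ t, m ≤ t → t < j → P t :=
  ⟨exists_until hm hP hQ, of_exists_until hlk hm hP hQ⟩

end BoundedUntil

theorem forall_Icc_iff_and_forall_Ico {P : ℕ → Prop} {a j : ℕ} (h : a ≤ j) :
    (∀ t, a ≤ t → t ≤ j → P t) ↔ P j ∧ ∀ t, a ≤ t → t < j → P t :=
  ⟨fun hP => ⟨hP j h le_rfl, fun t hat htj => hP t hat htj.le⟩,
    fun ⟨hPj, hP⟩ t hat htj => htj.lt_or_eq.elim (hP t hat) (· ▸ hPj)⟩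

theorem shift_zero {n : ℕ} (π : ℕ → Fin n → ℝ) : shift π 0 = π := by
  funext t
  simp [shift]

theorem shift_shift {n : ℕ} (π : ℕ → Fin n → ℝ) (a b : ℕ) :
    shift (shift π a) b = shift π (a + b) := by
  funext t
  simp [shift, Nat.add_assoc]

section Semantics

variable {n : ℕ} {π : ℕ → Fin n → ℝ} {k l m : ℕ} {φ₁ φ₂ : TDLTL n}

theorem sat_const_add (α : ℝ) (φ : TDLTL n) (π : ℕ → Fin n → ℝ) :
    Sat φ (fun t i => α + π t i) ↔ Sat φ π := by
  induction φ generalizing π with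
  | top | bot => exact Iff.rfl
  | atom | natom => simp only [Sat, add_sub_add_left_eq_sub]
  | and _ _ ih₁ ih₂ => exact and_congr (ih₁ π) (ih₂ π)
  | or _ _ ih₁ ih₂ => exact or_congr (ih₁ π) (ih₂ π)
  | next _ ih => exact ih (shift π 1)
  | untl _ _ ih₁ ih₂ =>
    exact exists_congr fun j => and_congr (ih₂ _) (forall₂_congr fun t _ => ih₁ (shift π t))
  | release _ _ ih₁ ih₂ =>
    exact or_congr (forall_congr' fun j => ih₂ (shift π j))
      (exists_congr fun j => and_congr (ih₁ _) (forall₂_congr fun t _ => ih₂ (shift π t)))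

theorem lassoPeriodic_sat_shift {α : ℝ}
    (hα : ∀ (j : ℕ) (i : Fin n), π (k + 1 + j) i = α + π (l + j) i) (φ : TDLTL n) :
    LassoPeriodic k l fun t => Sat φ (shift π t) := by
  intro d
  have : shift π (k + 1 + d) = fun t i => α + shift π (l + d) t i := by
    funext t i
    simp only [shift, Nat.add_assoc, ← hα]
  dsimp only
  rw [this, sat_const_add]

theorem sat_untl_shift :
    Sat (.untl φ₁ φ₂) (shift π m) ↔
      ∃ j, m ≤ j ∧ Sat φ₂ (shift π j) ∧
        ∀ t, m ≤ t → t < j → Sat φ₁ (shift π t) := by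
  simp only [Sat, shift_shift]
  constructor
  · rintro ⟨j, hj, hlt⟩
    exact ⟨m + j, by omega, hj, fun t hmt ht => by
      simpa [Nat.add_sub_cancel' hmt] using hlt (t - m) (by omega)⟩
  · rintro ⟨j, hmj, hj, hlt⟩
    exact ⟨j - m, by rwa [Nat.add_sub_cancel' hmj], fun t ht =>
      hlt _ (by omega) (by omega)⟩

theorem sat_release_shift :
    Sat (.release φ₁ φ₂) (shift π m) ↔
      (∀ t, m ≤ t → Sat φ₂ (shift π t)) ∨
        ∃ j, m ≤ j ∧ (Sat φ₁ (shift π j) ∧ Sat φ₂ (shift π j)) ∧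
          ∀ t, m ≤ t → t < j → Sat φ₂ (shift π t) := by
  simp only [Sat, shift_shift]
  refine or_congr ⟨fun h t hmt => ?_, fun h j => h _ (by omega)⟩ ⟨?_, ?_⟩
  · simpa [Nat.add_sub_cancel' hmt] using h (t - m)
  · rintro ⟨j, h₁, h₂⟩
    exact ⟨m + j, by omega, ⟨h₁, h₂ j le_rfl⟩, fun t hmt ht => by
      simpa [Nat.add_sub_cancel' hmt] using h₂ (t - m) (by omega)⟩
  · rintro ⟨j, hmj, ⟨h₁, h₂⟩, hlt⟩
    refine ⟨j - m, by rwa [Nat.add_sub_cancel' hmj], fun t ht => ?_⟩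
    rcases ht.lt_or_eq with ht | rfl
    · exact hlt _ (by omega) (by omega)
    · rwa [Nat.add_sub_cancel' hmj]

theorem bsat_untl :
    BSat π k l (.untl φ₁ φ₂) m ↔ BoundedUntil k l (BSat π k l φ₁) (BSat π k l φ₂) m :=
  Iff.rfl

theorem bsat_release :
    BSat π k l (.release φ₁ φ₂) m ↔
      (∀ t, min m l ≤ t → t ≤ k → BSat π k l φ₂ t) ∨
        BoundedUntil k l (BSat π k l φ₂)
          (fun t => BSat π k l φ₁ t ∧ BSat π k l φ₂ t) m := by
  refine or_congr_right (or_congr ?_ ?_) <;>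
    refine exists_congr fun j => and_congr_right fun hj => and_congr_right fun _ => ?_
  · rw [forall_Icc_iff_and_forall_Ico hj, and_assoc]
  · rw [forall_Icc_iff_and_forall_Ico hj]
    tauto

theorem bsat_iff_sat_shift (hlk : l ≤ k)
    (hper : ∀ φ : TDLTL n, LassoPeriodic k l fun t => Sat φ (shift π t)) (φ : TDLTL n) :
    ∀ m ≤ k, BSat π k l φ m ↔ Sat φ (shift π m) := by
  induction φ with
  | top | bot | atom | natom => exact fun _ _ => Iff.rfl
  | and _ _ ih₁ ih₂ => exact fun m hm => and_congr (ih₁ m hm) (ih₂ m hm)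
  | or _ _ ih₁ ih₂ => exact fun m hm => or_congr (ih₁ m hm) (ih₂ m hm)
  | next φ ih =>
    intro m hm
    simp only [BSat, Sat, shift_shift]
    split_ifs with hmk
    · exact ih (m + 1) hmk
    · obtain rfl : m = k := by omega
      exact (ih l hlk).trans ((hper φ).iff_of_add_eq le_rfl (by omega)).symm
  | untl φ₁ φ₂ ih₁ ih₂ =>
    intro m hm
    rw [bsat_untl, BoundedUntil.congr hm ih₁ ih₂,
      BoundedUntil.iff_exists_until hlk hm (hper φ₁) (hper φ₂), sat_untl_shift]
  | release φ₁ φ₂ ih₁ ih₂ =>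
    intro m hm
    rw [bsat_release, sat_release_shift, (hper φ₂).forall_ge_iff_forall_Icc hlk hm,
      ← BoundedUntil.iff_exists_until hlk hm (hper φ₂) ((hper φ₁).and (hper φ₂)),
      BoundedUntil.congr hm ih₂ fun t ht => and_congr (ih₁ t ht) (ih₂ t ht)]
    exact or_congr_left (forall₃_congr fun t _ ht => ih₂ t ht)

end Semantics

theorem bounded_lasso_sat_iff_sat {n : ℕ} (k l : ℕ) (hlk : l ≤ k)
    (π : ℕ → Fin n → ℝ)
    (hlasso : ∃ α : ℝ, ∀ (j : ℕ) (i : Fin n), π (k + 1 + j) i = α + π (l + j) i) :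
    ∀ φ : TDLTL n, BSat π k l φ 0 ↔ Sat φ π := by
  obtain ⟨α, hα⟩ := hlasso
  intro φ
  simpa only [shift_zero] using
    bsat_iff_sat_shift hlk (lassoPeriodic_sat_shift hα) φ 0 (Nat.zero_le k)
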